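/- arXiv:2211.08677 — 2 statements merged into one kernel-verified Lean document; each statement's English description precedes it below -/
import Mathlib

section
/- Let C ⊆ ℝⁿ and let I ⊆ {1,…,n} be nonempty with π(C) unbounded. Then the Clarke tangent cone at infinity T_C(∞_I) is a closed convex cone in ℝⁿ containing the origin 0. -/
open Filter Topology Metric Set Bornology
open scoped InnerProductSpace Pointwise

noncomputable section

/-- Euclidean `n`-space. -/
abbrev En (n : ℕ) : Type := EuclideanSpace ℝ (Fin n)

/-- The Clarke tangent cone at infinity of `C ⊆ E`, where "going to infinity" is
measured by `‖p x‖ → ∞` for a projection map `p`:  `v` belongs to the cone iff for all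
sequences `x k ∈ C` with `‖p (x k)‖ → ∞` and all positive sequences `t k → 0` there is a
sequence `w k → v` with `x k + t k • w k ∈ C` for all `k`. -/
def tangentConeAtInfty {E F : Type*} [NormedAddCommGroup E] [NormedSpace ℝ E] [Norm F]
    (p : E → F) (C : Set E) : Set E :=
  {v | ∀ (x : ℕ → E) (t : ℕ → ℝ), (∀ k, x k ∈ C) →
      Tendsto (fun k => ‖p (x k)‖) atTop atTop →
      (∀ k, 0 < t k) → Tendsto t atTop (𝓝 0) →
      ∃ w : ℕ → E, Tendsto w atTop (𝓝 v) ∧ ∀ k, x k + t k • w k ∈ C}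

/-- Projection of `ℝⁿ` onto the coordinates indexed by `I`. -/
def proj {n : ℕ} (I : Finset (Fin n)) (x : En n) : EuclideanSpace ℝ ↥I := WithLp.toLp 2 (fun i : ↥I => x i)

/-!
For fixed `x` and `t`, the directions admitted by the definition form the set of limits of
sequences `w k ∈ A k` with `A k = {w | x k + t k • w ∈ C}`; this is the set where
`infDist v (A k) → 0` (when every `A k` is nonempty), closed because `infDist` is 1-Lipschitz
in `v`. The cone is an intersection of such sets, hence closed. Rescaling `t` shows it is a cone.
For `u + v`, follow `u` from `x k` to `x k + t k • w k`, which still goes to infinity since the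
shift tends to `0` and the projection is uniformly continuous, and then follow `v` from there.
-/

section Limits

variable {X : Type*} [PseudoMetricSpace X]

theorem exists_tendsto_forall_mem_iff (A : ℕ → Set X) (v : X) :
    (∃ w : ℕ → X, Tendsto w atTop (𝓝 v) ∧ ∀ k, w k ∈ A k) ↔
      (∀ k, (A k).Nonempty) ∧ Tendsto (fun k => infDist v (A k)) atTop (𝓝 0) := by
  constructor
  · rintro ⟨w, hw, hwA⟩
    refine ⟨fun k => ⟨w k, hwA k⟩, squeeze_zero (fun _ => infDist_nonneg)
      (fun k => infDist_le_dist_of_mem (hwA k)) ?_⟩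
    simpa [dist_comm] using (tendsto_iff_dist_tendsto_zero.mp hw)
  · rintro ⟨hne, hdist⟩
    have hnear : ∀ k, ∃ y ∈ A k, dist v y < infDist v (A k) + 1 / (k + 1) := fun k =>
      (infDist_lt_iff (hne k)).mp (lt_add_of_pos_right _ Nat.one_div_pos_of_nat)
    choose w hwA hw using hnear
    refine ⟨w, tendsto_iff_dist_tendsto_zero.mpr ?_, hwA⟩
    refine squeeze_zero (fun _ => dist_nonneg) (fun k => (dist_comm _ _).trans_le (hw k).le) ?_
    simpa using hdist.add tendsto_one_div_add_atTop_nhds_zero_nat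

theorem isClosed_setOf_tendsto_infDist_zero (A : ℕ → Set X) :
    IsClosed {v | Tendsto (fun k => infDist v (A k)) atTop (𝓝 0)} := by
  refine isClosed_of_closure_subset fun v hv => ?_
  refine Metric.tendsto_atTop.mpr fun ε hε => ?_
  obtain ⟨v', hv', hvv'⟩ := Metric.mem_closure_iff.mp hv (ε / 2) (half_pos hε)
  obtain ⟨N, hN⟩ := Metric.tendsto_atTop.mp hv' (ε / 2) (half_pos hε)
  refine ⟨N, fun k hk => ?_⟩
  have hk' := hN k hk
  rw [Real.dist_0_eq_abs, abs_of_nonneg infDist_nonneg] at hk' ⊢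
  calc infDist v (A k) ≤ infDist v' (A k) + dist v v' := infDist_le_infDist_add_dist
    _ < ε / 2 + ε / 2 := add_lt_add hk' hvv'
    _ = ε := add_halves ε

theorem isClosed_setOf_exists_tendsto_forall_mem (A : ℕ → Set X) :
    IsClosed {v | ∃ w : ℕ → X, Tendsto w atTop (𝓝 v) ∧ ∀ k, w k ∈ A k} := by
  simp only [exists_tendsto_forall_mem_iff, ofPred_and]
  exact isClosed_const.inter (isClosed_setOf_tendsto_infDist_zero A)

end Limits

theorem UniformContinuous.tendsto_norm_comp_add_atTop {E F ι : Type*}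
    [SeminormedAddCommGroup E] [SeminormedAddCommGroup F] {p : E → F} (hp : UniformContinuous p)
    {l : Filter ι} {x d : ι → E} (hx : Tendsto (fun k => ‖p (x k)‖) l atTop)
    (hd : Tendsto d l (𝓝 0)) : Tendsto (fun k => ‖p (x k + d k)‖) l atTop := by
  have hshift : Tendsto (fun k => dist (p (x k + d k)) (p (x k))) l (𝓝 0) := by
    have hpair : Tendsto (fun k => (x k + d k, x k)) l (uniformity E) :=
      tendsto_uniformity_iff_dist_tendsto_zero.mpr (by simpa [dist_eq_norm] using hd.norm)
    exact tendsto_uniformity_iff_dist_tendsto_zero.mp (Tendsto.comp hp hpair)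
  refine tendsto_atTop_mono (fun k => ?_) (hx.atTop_add (by simpa using hshift.neg))
  have := norm_sub_norm_le (p (x k)) (p (x k + d k))
  rw [← dist_eq_norm, dist_comm] at this
  linarith

section TangentCone

variable {E F : Type*} [NormedAddCommGroup E] [NormedSpace ℝ E]

theorem zero_mem_tangentConeAtInfty [Norm F] (p : E → F) (C : Set E) :
    (0 : E) ∈ tangentConeAtInfty p C :=
  fun x _ hx _ _ _ => ⟨fun _ => 0, tendsto_const_nhds, fun k => by simpa using hx k⟩

theorem smul_mem_tangentConeAtInfty [Norm F] {p : E → F} {C : Set E} {v : E}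
    (hv : v ∈ tangentConeAtInfty p C) {c : ℝ} (hc : 0 ≤ c) :
    c • v ∈ tangentConeAtInfty p C := by
  rcases hc.eq_or_lt with rfl | hc
  · simpa using zero_mem_tangentConeAtInfty p C
  intro x t hx hpx ht ht0
  obtain ⟨w, hw, hwC⟩ := hv x (fun k => c * t k) hx hpx (fun k => mul_pos hc (ht k))
    (by simpa using ht0.const_mul c)
  exact ⟨fun k => c • w k, hw.const_smul c,
    fun k => by simpa [smul_smul, mul_comm] using hwC k⟩

theorem add_mem_tangentConeAtInfty [SeminormedAddCommGroup F] {p : E → F}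
    (hp : UniformContinuous p) {C : Set E} {u v : E} (hu : u ∈ tangentConeAtInfty p C)
    (hv : v ∈ tangentConeAtInfty p C) :
    u + v ∈ tangentConeAtInfty p C := by
  intro x t hx hpx ht ht0
  obtain ⟨w, hw, hwC⟩ := hu x t hx hpx ht ht0
  have hpy : Tendsto (fun k => ‖p (x k + t k • w k)‖) atTop atTop :=
    hp.tendsto_norm_comp_add_atTop hpx (by simpa using ht0.smul hw)
  obtain ⟨z, hz, hzC⟩ := hv (fun k => x k + t k • w k) t hwC hpy ht ht0
  exact ⟨w + z, hw.add hz, fun k => by simpa [smul_add, add_assoc] using hzC k⟩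

theorem convex_tangentConeAtInfty [SeminormedAddCommGroup F] {p : E → F}
    (hp : UniformContinuous p) (C : Set E) :
    Convex ℝ (tangentConeAtInfty p C) :=
  fun _ hu _ hv _ _ ha hb _ => add_mem_tangentConeAtInfty hp (smul_mem_tangentConeAtInfty hu ha)
    (smul_mem_tangentConeAtInfty hv hb)

theorem isClosed_tangentConeAtInfty [Norm F] (p : E → F) (C : Set E) :
    IsClosed (tangentConeAtInfty p C) := by
  simp only [tangentConeAtInfty, ofPred_forall]
  exact isClosed_iInter fun x => isClosed_iInter fun t => isClosed_iInter fun _ =>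
    isClosed_iInter fun _ => isClosed_iInter fun _ => isClosed_iInter fun _ =>
      isClosed_setOf_exists_tendsto_forall_mem fun k => {w | x k + t k • w ∈ C}

end TangentCone

theorem uniformContinuous_proj {n : ℕ} (I : Finset (Fin n)) : UniformContinuous (proj I) :=
  let L : En n →ₗ[ℝ] EuclideanSpace ℝ ↥I :=
    { toFun := proj I, map_add' := fun _ _ => rfl, map_smul' := fun _ _ => rfl }
  (LinearMap.toContinuousLinearMap L).uniformContinuous

theorem stmt1_general (n : ℕ) (C : Set (En n)) (I : Finset (Fin n)) :
    IsClosed (tangentConeAtInfty (proj I) C) ∧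
    Convex ℝ (tangentConeAtInfty (proj I) C) ∧
    (∀ v ∈ tangentConeAtInfty (proj I) C, ∀ c : ℝ, 0 ≤ c →
      c • v ∈ tangentConeAtInfty (proj I) C) ∧
    (0 : En n) ∈ tangentConeAtInfty (proj I) C :=
  ⟨isClosed_tangentConeAtInfty _ C, convex_tangentConeAtInfty (uniformContinuous_proj I) C,
    fun _ hv _ hc => smul_mem_tangentConeAtInfty hv hc, zero_mem_tangentConeAtInfty _ C⟩

/-- Corollary 3.5: the Clarke tangent cone at infinity is a closed convex cone
containing the origin. -/
theorem stmt1 (n : ℕ) (C : Set (En n)) (I : Finset (Fin n)) (hI : I.Nonempty)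
    (hunb : ¬ IsBounded (proj I '' C)) :
    IsClosed (tangentConeAtInfty (proj I) C) ∧
    Convex ℝ (tangentConeAtInfty (proj I) C) ∧
    (∀ v ∈ tangentConeAtInfty (proj I) C, ∀ c : ℝ, 0 ≤ c →
      c • v ∈ tangentConeAtInfty (proj I) C) ∧
    (0 : En n) ∈ tangentConeAtInfty (proj I) C :=
  stmt1_general n C I
end
end

section
/- Let C ⊆ ℝⁿ be nonempty and let I ⊆ {1,…,n} be nonempty with π(C) unbounded, and let d_C(x) := inf_{y ∈ C} ‖x − y‖ be the distance function to C. Then a vector v ∈ ℝⁿ belongs to T_C(∞_I) if and only if for every sequence x_k ∈ ℝⁿ with ‖π(x_k)‖ → ∞ and d_C(x_k) → 0 and every sequence of positive reals t_k → 0, one has limsup_{k→∞} (d_C(x_k + t_k v) − d_C(x_k))/t_k ≤ 0 (equivalently, the limsup of (d_C(x + t v) − d_C(x))/t as ‖π(x)‖ → ∞, d_C(x) → 0 and t ↓ 0 equals 0). -/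
open Filter Topology Metric Set Bornology
open scoped InnerProductSpace Pointwise

noncomputable section

/-!
`⇒`: take near-projections `y k ∈ C` of `x k`, with `dist (x k) (y k) ≤ d_C (x k) + t k ^ 2`.
Since `p` is Lipschitz, `‖p (y k)‖ → ∞`, so the cone supplies `w k → v` with
`y k + t k • w k ∈ C`, and comparing with this point bounds the difference quotient by
`t k + dist (w k) v → 0`.

`⇐`: for `x k ∈ C` the quotient is `d_C (x k + t k • v) / t k ≥ 0`, so it tends to `0`; then
`w k := (t k)⁻¹ • (z k - x k)`, for near-projections `z k ∈ C` of `x k + t k • v`, converges to `v`.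
-/

lemma exists_seq_mem_dist_lt_infDist_add {E : Type*} [PseudoMetricSpace E] {C : Set E}
    (hC : C.Nonempty) (x : ℕ → E) {ε : ℕ → ℝ} (hε : ∀ k, 0 < ε k) :
    ∃ y : ℕ → E, ∀ k, y k ∈ C ∧ dist (x k) (y k) < infDist (x k) C + ε k := by
  choose y hy using fun k => (infDist_lt_iff (x := x k) hC).1 (lt_add_of_pos_right _ (hε k))
  exact ⟨y, hy⟩

section NormedSpace

variable {E : Type*} [NormedAddCommGroup E] [NormedSpace ℝ E] {C : Set E}

lemma abs_infDist_add_smul_sub_div_le (x v : E) {t : ℝ} (ht : 0 < t) :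
    |(infDist (x + t • v) C - infDist x C) / t| ≤ ‖v‖ := by
  rw [abs_div, abs_of_pos ht, div_le_iff₀ ht, ← Real.dist_eq]
  calc dist (infDist (x + t • v) C) (infDist x C) ≤ 1 * dist (x + t • v) x :=
        (lipschitz_infDist_pt (s := C)).dist_le_mul _ _
    _ = ‖v‖ * t := by rw [one_mul, dist_self_add_left, norm_smul, Real.norm_of_nonneg ht.le, mul_comm]

lemma infDist_add_smul_sub_div_le {x y v w : E} {t : ℝ} (ht : 0 < t)
    (hxy : dist x y ≤ infDist x C + t ^ 2) (hw : y + t • w ∈ C) :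
    (infDist (x + t • v) C - infDist x C) / t ≤ t + dist w v := by
  rw [div_le_iff₀ ht]
  calc infDist (x + t • v) C - infDist x C
      ≤ dist (x + t • v) (y + t • w) - infDist x C := by gcongr; exact infDist_le_dist_of_mem hw
    _ ≤ dist x y + t * dist w v - infDist x C := by
        gcongr
        calc dist (x + t • v) (y + t • w) ≤ dist x y + dist (t • v) (t • w) := dist_add_add_le _ _ _ _
          _ = dist x y + t * dist w v := by rw [dist_smul₀, Real.norm_of_nonneg ht.le, dist_comm v]
    _ ≤ (t + dist w v) * t := by nlinarith

lemma dist_inv_smul_sub_le {x z v : E} {t : ℝ} (ht : 0 < t)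
    (hz : dist (x + t • v) z ≤ infDist (x + t • v) C + t ^ 2) :
    dist (t⁻¹ • (z - x)) v ≤ infDist (x + t • v) C / t + t := by
  have hrepr : t⁻¹ • (z - x) - v = t⁻¹ • (z - (x + t • v)) := by
    rw [smul_sub, smul_sub, smul_add, smul_smul, inv_mul_cancel₀ ht.ne', one_smul]; abel
  rw [dist_eq_norm, hrepr, norm_smul, Real.norm_of_nonneg (inv_pos.2 ht).le, ← dist_eq_norm',
    inv_mul_le_iff₀ ht]
  calc dist (x + t • v) z ≤ infDist (x + t • v) C + t ^ 2 := hz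
    _ = t * (infDist (x + t • v) C / t + t) := by field_simp

end NormedSpace

lemma tendsto_norm_atTop_of_tendsto_dist_zero {ι E F : Type*} [PseudoMetricSpace E]
    [SeminormedAddCommGroup F] {l : Filter ι} {p : E → F} {K : NNReal} (hp : LipschitzWith K p)
    {x y : ι → E} (hx : Tendsto (fun k => ‖p (x k)‖) l atTop)
    (hxy : Tendsto (fun k => dist (x k) (y k)) l (𝓝 0)) :
    Tendsto (fun k => ‖p (y k)‖) l atTop := by
  refine tendsto_atTop_mono (fun k => ?_) (by simpa using hx.atTop_add (hxy.const_mul (-(K : ℝ))))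
  have hlip := hp.dist_le_mul (x k) (y k)
  have htri := norm_sub_norm_le (p (x k)) (p (y k))
  rw [dist_eq_norm (p (x k))] at hlip
  linarith

lemma tendsto_zero_of_limsup_nonpos {f : ℕ → ℝ} {M : ℝ} (h0 : ∀ k, 0 ≤ f k) (hM : ∀ k, f k ≤ M)
    (h : limsup f atTop ≤ 0) : Tendsto f atTop (𝓝 0) :=
  tendsto_of_le_liminf_of_limsup_le
    (le_liminf_of_le (isBoundedUnder_of ⟨M, hM⟩).isCoboundedUnder_ge (Eventually.of_forall h0)) h
    (isBoundedUnder_of ⟨M, hM⟩) (isBoundedUnder_of ⟨0, h0⟩)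

section TangentCone

variable {E F : Type*} [NormedAddCommGroup E] [NormedSpace ℝ E] [SeminormedAddCommGroup F]
  {p : E → F} {C : Set E} {v : E}

theorem limsup_infDist_quotient_nonpos_of_mem_tangentConeAtInfty {K : NNReal}
    (hp : LipschitzWith K p) (hC : C.Nonempty) (hv : v ∈ tangentConeAtInfty p C)
    {x : ℕ → E} {t : ℕ → ℝ} (hx : Tendsto (fun k => ‖p (x k)‖) atTop atTop)
    (hd : Tendsto (fun k => infDist (x k) C) atTop (𝓝 0)) (ht : ∀ k, 0 < t k)
    (ht0 : Tendsto t atTop (𝓝 0)) :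
    limsup (fun k => (infDist (x k + t k • v) C - infDist (x k) C) / t k) atTop ≤ 0 := by
  obtain ⟨y, hy⟩ := exists_seq_mem_dist_lt_infDist_add hC x fun k => pow_pos (ht k) 2
  have hxy : Tendsto (fun k => dist (x k) (y k)) atTop (𝓝 0) :=
    squeeze_zero (fun _ => dist_nonneg) (fun k => (hy k).2.le) (by simpa using hd.add (ht0.pow 2))
  obtain ⟨w, hw, hwC⟩ :=
    hv y t (fun k => (hy k).1) (tendsto_norm_atTop_of_tendsto_dist_zero hp hx hxy) ht ht0
  have hbound : Tendsto (fun k => t k + dist (w k) v) atTop (𝓝 0) := by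
    simpa using ht0.add (tendsto_iff_dist_tendsto_zero.1 hw)
  have hbdd : IsBoundedUnder (· ≥ ·) atTop
      fun k => (infDist (x k + t k • v) C - infDist (x k) C) / t k :=
    isBoundedUnder_of ⟨-‖v‖, fun k => neg_le_of_abs_le (abs_infDist_add_smul_sub_div_le _ _ (ht k))⟩
  calc limsup (fun k => (infDist (x k + t k • v) C - infDist (x k) C) / t k) atTop
      ≤ limsup (fun k => t k + dist (w k) v) atTop :=
        limsup_le_limsup
          (Eventually.of_forall fun k => infDist_add_smul_sub_div_le (ht k) (hy k).2.le (hwC k))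
          hbdd.isCoboundedUnder_le hbound.isBoundedUnder_le
    _ = 0 := hbound.limsup_eq

theorem mem_tangentConeAtInfty_of_limsup_infDist_quotient_nonpos (hC : C.Nonempty)
    (h : ∀ (x : ℕ → E) (t : ℕ → ℝ), Tendsto (fun k => ‖p (x k)‖) atTop atTop →
      Tendsto (fun k => infDist (x k) C) atTop (𝓝 0) → (∀ k, 0 < t k) → Tendsto t atTop (𝓝 0) →
      limsup (fun k => (infDist (x k + t k • v) C - infDist (x k) C) / t k) atTop ≤ 0) :
    v ∈ tangentConeAtInfty p C := by
  intro x t hxC hx ht ht0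
  have hdx : ∀ k, infDist (x k) C = 0 := fun k => infDist_zero_of_mem (hxC k)
  have hq : Tendsto (fun k => infDist (x k + t k • v) C / t k) atTop (𝓝 0) := by
    have hlim := h x t hx (by simp only [hdx]; exact tendsto_const_nhds) ht ht0
    have hquot := fun k => abs_le.1 (abs_infDist_add_smul_sub_div_le (C := C) (x k) v (ht k))
    simp only [hdx, sub_zero] at hlim hquot
    exact tendsto_zero_of_limsup_nonpos (fun k => div_nonneg infDist_nonneg (ht k).le)
      (fun k => (hquot k).2) hlim
  obtain ⟨z, hz⟩ := exists_seq_mem_dist_lt_infDist_add hC (fun k => x k + t k • v)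
    fun k => pow_pos (ht k) 2
  refine ⟨fun k => (t k)⁻¹ • (z k - x k), ?_, fun k => ?_⟩
  · exact tendsto_iff_dist_tendsto_zero.2 <| squeeze_zero (fun _ => dist_nonneg)
      (fun k => dist_inv_smul_sub_le (ht k) (hz k).2.le) (by simpa using hq.add ht0)
  · simpa [smul_smul, (ht k).ne'] using (hz k).1

theorem mem_tangentConeAtInfty_iff_limsup_infDist_quotient_nonpos {K : NNReal}
    (hp : LipschitzWith K p) (hC : C.Nonempty) :
    v ∈ tangentConeAtInfty p C ↔
      ∀ (x : ℕ → E) (t : ℕ → ℝ), Tendsto (fun k => ‖p (x k)‖) atTop atTop →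
        Tendsto (fun k => infDist (x k) C) atTop (𝓝 0) → (∀ k, 0 < t k) →
        Tendsto t atTop (𝓝 0) →
        limsup (fun k => (infDist (x k + t k • v) C - infDist (x k) C) / t k) atTop ≤ 0 :=
  ⟨fun hv _ _ hx hd ht ht0 =>
      limsup_infDist_quotient_nonpos_of_mem_tangentConeAtInfty hp hC hv hx hd ht ht0,
    mem_tangentConeAtInfty_of_limsup_infDist_quotient_nonpos hC⟩

end TangentCone

lemma norm_proj_le {n : ℕ} (I : Finset (Fin n)) (x : En n) : ‖proj I x‖ ≤ ‖x‖ := by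
  rw [EuclideanSpace.norm_eq, EuclideanSpace.norm_eq]
  apply Real.sqrt_le_sqrt
  calc ∑ i : ↥I, ‖proj I x i‖ ^ 2 = ∑ i ∈ I, ‖x i‖ ^ 2 := by
        rw [← Finset.sum_coe_sort I (fun i => ‖x i‖ ^ 2)]; rfl
    _ ≤ ∑ i : Fin n, ‖x i‖ ^ 2 :=
        Finset.sum_le_sum_of_subset_of_nonneg (Finset.subset_univ I) (by intros; positivity)

lemma proj_sub {n : ℕ} (I : Finset (Fin n)) (x y : En n) :
    proj I (x - y) = proj I x - proj I y :=
  rfl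

lemma lipschitzWith_one_proj {n : ℕ} (I : Finset (Fin n)) : LipschitzWith 1 (proj I) :=
  LipschitzWith.of_dist_le_mul fun x y => by
    simpa [dist_eq_norm, ← proj_sub] using norm_proj_le I (x - y)

theorem stmt4_general (n : ℕ) (C : Set (En n)) (I : Finset (Fin n))
    (hCne : C.Nonempty) (v : En n) :
    v ∈ tangentConeAtInfty (proj I) C ↔
      ∀ (x : ℕ → En n) (t : ℕ → ℝ),
        Tendsto (fun k => ‖proj I (x k)‖) atTop atTop →
        Tendsto (fun k => Metric.infDist (x k) C) atTop (𝓝 0) →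
        (∀ k, 0 < t k) → Tendsto t atTop (𝓝 0) →
        Filter.limsup
          (fun k => (Metric.infDist (x k + t k • v) C - Metric.infDist (x k) C) / t k)
          atTop ≤ 0 :=
  mem_tangentConeAtInfty_iff_limsup_infDist_quotient_nonpos (lipschitzWith_one_proj I) hCne

/-- Proposition 3.9: analytic characterization of the Clarke tangent cone at infinity
via the distance function `d_C`. -/
theorem stmt4 (n : ℕ) (C : Set (En n)) (I : Finset (Fin n)) (hI : I.Nonempty)
    (hCne : C.Nonempty) (hunb : ¬ IsBounded (proj I '' C)) (v : En n) :
    v ∈ tangentConeAtInfty (proj I) C ↔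
      ∀ (x : ℕ → En n) (t : ℕ → ℝ),
        Tendsto (fun k => ‖proj I (x k)‖) atTop atTop →
        Tendsto (fun k => Metric.infDist (x k) C) atTop (𝓝 0) →
        (∀ k, 0 < t k) → Tendsto t atTop (𝓝 0) →
        Filter.limsup
          (fun k => (Metric.infDist (x k + t k • v) C - Metric.infDist (x k) C) / t k)
          atTop ≤ 0 :=
  stmt4_general n C I hCne v
end
end
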